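/- arXiv:2408.16585 — 2 statements merged into one kernel-verified Lean document; each statement's English description precedes it below -/
import Mathlib

section
/- For nonnegative integers K, L and 0 ≤ q < 1, the probabilities P(s) := q^{(K-s)(L-s)} · [∏_{i=0}^{s-1} (1-q^{K-i})(1-q^{L-i})] / [∏_{i=1}^{s} (1-q^i)] sum to 1 over s = 0, 1, ..., min(K,L). -/
open Finset

/-- The one-point Mallows height probability
`q^{(K-s)(L-s)} ∏_{i=0}^{s-1}(1-q^{K-i})(1-q^{L-i}) / ∏_{i=1}^{s}(1-q^i)`. -/
noncomputable def mallowsHeightProb (q : ℝ) (K L s : ℕ) : ℝ :=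
  q ^ ((K - s) * (L - s))
    * (∏ i ∈ Finset.range s, (1 - q ^ (K - i)) * (1 - q ^ (L - i)))
    / ∏ i ∈ Finset.range s, (1 - q ^ (i + 1))

/-
Fix `L` and induct on `K ≤ L`. The probabilities for `K + 1` arise from those for `K` by a
transition that keeps the mass at `s` with weight `q^(L-s)` and moves the rest to `s + 1`;
on the products this is the `q`-Pascal rule for `∏ (1 - q^(K-i))`. Hence the total mass is
preserved, and for `K = 0` the only term is `q^0 = 1`. The case `L ≤ K` follows by symmetry.
-/

/-- `q`-Pascal rule for the products `∏_{i<s} (1 - q^(K-i))`. -/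
lemma prod_one_sub_pow_add_one_sub {R : Type*} [CommRing R] (q : R) (K : ℕ) :
    ∀ s ≤ K, ∏ i ∈ range (s + 1), (1 - q ^ (K + 1 - i)) =
      ∏ i ∈ range (s + 1), (1 - q ^ (K - i))
        + q ^ (K - s) * (1 - q ^ (s + 1)) * ∏ i ∈ range s, (1 - q ^ (K - i)) := by
  intro s
  induction s with
  | zero => intro; simp only [zero_add, prod_range_one, prod_range_zero, Nat.sub_zero, pow_succ]; ring
  | succ s ih =>
    intro hs
    rw [prod_range_succ _ (s + 1), ih (by omega), prod_range_succ _ (s + 1),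
      prod_range_succ _ s, show K + 1 - (s + 1) = K - (s + 1) + 1 by omega,
      show K - s = K - (s + 1) + 1 by omega]
    ring

lemma sum_range_succ_eq_of_transport {R : Type*} [CommRing R] (f g a : ℕ → R) (n : ℕ)
    (h_first : g 0 = a 0 * f 0)
    (h_mid : ∀ s < n, g (s + 1) = a (s + 1) * f (s + 1) + (1 - a s) * f s)
    (h_last : g (n + 1) = (1 - a n) * f n) :
    ∑ s ∈ range (n + 2), g s = ∑ s ∈ range (n + 1), f s := by
  have h_stay : ∑ s ∈ range (n + 1), a s * f s
      = ∑ s ∈ range n, a (s + 1) * f (s + 1) + a 0 * f 0 := sum_range_succ' _ n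
  have h_move : ∑ s ∈ range (n + 1), (1 - a s) * f s
      = ∑ s ∈ range n, (1 - a s) * f s + (1 - a n) * f n := sum_range_succ _ n
  calc ∑ s ∈ range (n + 2), g s
      = ∑ s ∈ range (n + 1), a s * f s + ∑ s ∈ range (n + 1), (1 - a s) * f s := by
        rw [sum_range_succ', sum_range_succ, sum_congr rfl fun s hs => h_mid s (mem_range.1 hs),
          sum_add_distrib, h_stay, h_move, h_first, h_last]
        ring
    _ = ∑ s ∈ range (n + 1), f s := by
        rw [← sum_add_distrib]
        exact sum_congr rfl fun s _ => by ring

lemma one_sub_pow_succ_pos {q : ℝ} (hq0 : 0 ≤ q) (hq1 : q < 1) (n : ℕ) :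
    0 < 1 - q ^ (n + 1) :=
  sub_pos.2 (pow_lt_one₀ hq0 hq1 n.succ_ne_zero)

lemma prod_one_sub_pow_succ_pos {q : ℝ} (hq0 : 0 ≤ q) (hq1 : q < 1) (s : ℕ) :
    0 < ∏ i ∈ range s, (1 - q ^ (i + 1)) :=
  prod_pos fun i _ => one_sub_pow_succ_pos hq0 hq1 i

lemma mallowsHeightProb_comm (q : ℝ) (K L s : ℕ) :
    mallowsHeightProb q K L s = mallowsHeightProb q L K s := by
  simp only [mallowsHeightProb, Nat.mul_comm (K - s), mul_comm (1 - q ^ (K - _))]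

lemma mallowsHeightProb_zero (q : ℝ) (K L : ℕ) :
    mallowsHeightProb q K L 0 = q ^ (K * L) := by
  simp [mallowsHeightProb]

lemma mallowsHeightProb_self {q : ℝ} (hq0 : 0 ≤ q) (hq1 : q < 1) (K L : ℕ) :
    mallowsHeightProb q K L K = ∏ i ∈ range K, (1 - q ^ (L - i)) := by
  have h_reflect : ∏ i ∈ range K, (1 - q ^ (K - i)) = ∏ i ∈ range K, (1 - q ^ (i + 1)) := by
    rw [← prod_range_reflect (fun j => 1 - q ^ (j + 1)) K]
    exact prod_congr rfl fun i hi => by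
      rw [show K - 1 - i + 1 = K - i by have := mem_range.1 hi; omega]
  rw [mallowsHeightProb, Nat.sub_self, zero_mul, pow_zero, one_mul, prod_mul_distrib,
    h_reflect, mul_div_right_comm, div_self (prod_one_sub_pow_succ_pos hq0 hq1 K).ne', one_mul]

lemma mallowsHeightProb_succ_self {q : ℝ} (hq0 : 0 ≤ q) (hq1 : q < 1) (K L : ℕ) :
    mallowsHeightProb q (K + 1) L (K + 1) = (1 - q ^ (L - K)) * mallowsHeightProb q K L K := by
  rw [mallowsHeightProb_self hq0 hq1, mallowsHeightProb_self hq0 hq1, prod_range_succ, mul_comm]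

lemma mallowsHeightProb_succ_succ {q : ℝ} (hq0 : 0 ≤ q) (hq1 : q < 1) {K L s : ℕ}
    (hsK : s + 1 ≤ K) (hsL : s + 1 ≤ L) :
    mallowsHeightProb q (K + 1) L (s + 1) =
      q ^ (L - (s + 1)) * mallowsHeightProb q K L (s + 1)
        + (1 - q ^ (L - s)) * mallowsHeightProb q K L s := by
  simp only [mallowsHeightProb, prod_mul_distrib]
  rw [show K + 1 - (s + 1) = K - s by omega, prod_one_sub_pow_add_one_sub q K s (by omega),
    prod_range_succ (fun i => 1 - q ^ (K - i)) s, prod_range_succ (fun i => 1 - q ^ (L - i)) s,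
    prod_range_succ (fun i => 1 - q ^ (i + 1)) s,
    show K - s = K - (s + 1) + 1 by omega, show L - s = L - (s + 1) + 1 by omega]
  have hD := (prod_one_sub_pow_succ_pos hq0 hq1 s).ne'
  have hF := (one_sub_pow_succ_pos hq0 hq1 s).ne'
  generalize K - (s + 1) = a
  generalize L - (s + 1) = b
  rw [show (a + 1) * b = a * b + b by ring, show (a + 1) * (b + 1) = a * b + a + b + 1 by ring]
  field_simp
  ring

lemma sum_mallowsHeightProb_of_le {q : ℝ} (hq0 : 0 ≤ q) (hq1 : q < 1) {K L : ℕ} (hKL : K ≤ L) :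
    ∑ s ∈ range (K + 1), mallowsHeightProb q K L s = 1 := by
  induction K with
  | zero => simp [mallowsHeightProb]
  | succ K ih =>
    rw [← ih (by omega)]
    refine sum_range_succ_eq_of_transport _ _ (fun s => q ^ (L - s)) K ?_ ?_ ?_
    · rw [mallowsHeightProb_zero, mallowsHeightProb_zero, Nat.sub_zero, ← pow_add, add_one_mul,
        add_comm]
    · exact fun s hs => mallowsHeightProb_succ_succ hq0 hq1 hs (by omega)
    · exact mallowsHeightProb_succ_self hq0 hq1 K L

/-- The one-point Mallows height probabilities sum to `1` over `s = 0, 1, …, min(K,L)`. -/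
theorem mallowsHeightProb_sum_eq_one (q : ℝ) (hq0 : 0 ≤ q) (hq1 : q < 1) (K L : ℕ) :
    ∑ s ∈ Finset.range (min K L + 1), mallowsHeightProb q K L s = 1 := by
  rcases le_total K L with h | h
  · rw [min_eq_left h]
    exact sum_mallowsHeightProb_of_le hq0 hq1 h
  · rw [min_eq_right h]
    simp_rw [mallowsHeightProb_comm q K L]
    exact sum_mallowsHeightProb_of_le hq0 hq1 h
end

section
/- The multi-point Mallows height function factorizes: for the Mallows-random permutation w of ℕ, nonnegative integers K, 0 ≤ L_1 ≤ ... ≤ L_r, and nonnegative integers s_1, ..., s_r with s_1 + ... + s_r ≤ K, the probability that f_{ℕ,K,L_1} = s_1 and f_{ℕ,K,L_j} − f_{ℕ,K,L_{j-1}} = s_j for j = 2,...,r equals ∏_{j=1}^{r} P(f_{ℕ, K − s_1 − ... − s_{j-1}, L_j − L_{j-1}} = s_j) (with L_0 = 0), where each factor is given by the explicit one-point formula. -/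
open MeasureTheory Finset

/-- The Gnedin–Olshanski sampling algorithm producing a Mallows-distributed random bijection
`ℕ → ℕ` (0-indexed) from a sequence of (iid geometric) values `ξ`. -/
noncomputable def gnedinOlshanski (ξ : ℕ → ℕ) : ℕ → ℕ :=
  fun k => Nat.nth (fun m => ∀ j, (h : j < k) → gnedinOlshanski ξ j ≠ m) (ξ k)
  termination_by k => k

/-!
In the Gnedin–Olshanski construction, position `m` receives a value below `K` exactly when
`ξ m` is smaller than the number of still unused values below `K`, i.e. than `K - h`, where `h`
counts the earlier positions that did so. Hence `L ↦ f_{ℕ,K,L}` is a Markov chain driven by the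
independent geometric variables, stepping up with probability `1 - q^(K-h)`, and its one-point
law obeys the q-Pascal recursion satisfied by `mallowsHeightProb`. After `L_{j-1}` steps the
chain restarts from `K - (s_1 + … + s_{j-1})`, driven by the fresh variables `ξ_{L_{j-1}}, …`,
so independence of disjoint blocks of the `ξ_i` makes the multi-point probability factorize.
-/

namespace Mallows

open ProbabilityTheory

/-- `height x K L` is `f_{ℕ,K,L}` for the permutation `gnedinOlshanski x`
(`card_filter_gnedinOlshanski_lt`). -/
def height (x : ℕ → ℕ) (K : ℕ) : ℕ → ℕ
  | 0 => 0
  | m + 1 => height x K m + if x m < K - height x K m then 1 else 0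

lemma height_congr {x y : ℕ → ℕ} {K m : ℕ} (h : ∀ i < m, x i = y i) :
    height x K m = height y K m := by
  induction m with
  | zero => rfl
  | succ m ih => rw [height, height, ih fun i hi => h i (by omega), h m (by omega)]

lemma height_add (x : ℕ → ℕ) (K b m : ℕ) :
    height x K (b + m) = height x K b + height (fun t => x (b + t)) (K - height x K b) m := by
  induction m with
  | zero => rfl
  | succ m ih =>
    rw [← add_assoc, height, height, ih, Nat.sub_sub]
    ac_rfl

lemma height_succ_eq_zero_iff (x : ℕ → ℕ) (K m : ℕ) :
    height x K (m + 1) = 0 ↔ height x K m = 0 ∧ K ≤ x m := by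
  rw [height]
  split_ifs <;> simp only [false_iff, add_zero, not_and, not_le] <;> omega

lemma height_succ_eq_succ_iff (x : ℕ → ℕ) (K m s : ℕ) :
    height x K (m + 1) = s + 1 ↔
      height x K m = s + 1 ∧ K - (s + 1) ≤ x m ∨ height x K m = s ∧ x m < K - s := by
  rw [height]
  split_ifs <;> omega

lemma height_eq_add_iff {x : ℕ → ℕ} {K b n c d : ℕ} (hbn : b ≤ n)
    (hb : height x K b = c) :
    height x K n = c + d ↔ height (fun t => x (b + t)) (K - c) (n - b) = d := by
  obtain ⟨m, rfl⟩ := Nat.exists_eq_add_of_le hbn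
  rw [height_add, hb, Nat.add_sub_cancel_left, add_right_inj]

lemma dependsOn_height_eq (K m c : ℕ) :
    DependsOn (fun x => height x K m = c) (range m : Set ℕ) := fun x y h =>
  congrArg (· = c) (height_congr fun i hi => h i (by simpa using hi))

lemma dependsOn_height_shift_eq (b K m c : ℕ) :
    DependsOn (fun x : ℕ → ℕ => height (fun t => x (b + t)) K m = c)
      (Ico b (b + m) : Set ℕ) := fun x y h =>
  congrArg (· = c) (height_congr fun i hi => h (b + i) (by simpa using hi))

lemma dependsOn_forall_height_eq {K r b : ℕ} {L c : ℕ → ℕ} (hLb : ∀ j < r, L j ≤ b) :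
    DependsOn (fun x => ∀ j < r, height x K (L j) = c j) (range b : Set ℕ) := fun x y h =>
  propext <| forall₂_congr fun j hj => by
    rw [height_congr fun i hi => h i (by simpa using hi.trans_le (hLb j hj))]

lemma setOf_gnedinOlshanski_ne_infinite (x : ℕ → ℕ) (k : ℕ) :
    {m | ∀ j < k, gnedinOlshanski x j ≠ m}.Infinite := by
  refine Set.infinite_of_finite_compl (((Set.finite_Iio k).image (gnedinOlshanski x)).subset ?_)
  intro m hm
  simp only [Set.mem_compl_iff, Set.mem_ofPred_eq, not_forall, not_not] at hm
  obtain ⟨j, hj, rfl⟩ := hm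
  exact ⟨j, hj, rfl⟩

lemma gnedinOlshanski_eq_nth (x : ℕ → ℕ) (k : ℕ) :
    gnedinOlshanski x k = Nat.nth (fun m => ∀ j < k, gnedinOlshanski x j ≠ m) (x k) := by
  rw [gnedinOlshanski]

lemma gnedinOlshanski_injective (x : ℕ → ℕ) : Function.Injective (gnedinOlshanski x) :=
  Function.Injective.of_lt_imp_ne fun j k hjk => by
    rw [gnedinOlshanski_eq_nth x k]
    exact Nat.nth_mem_of_infinite (setOf_gnedinOlshanski_ne_infinite x k) (x k) j hjk

lemma gnedinOlshanski_lt_iff (x : ℕ → ℕ) (K k : ℕ) :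
    gnedinOlshanski x k < K ↔ x k < K - #{i ∈ range k | gnedinOlshanski x i < K} := by
  set free := fun m => ∀ j < k, gnedinOlshanski x j ≠ m
  have hused : #{i ∈ range k | gnedinOlshanski x i < K} = #{m ∈ range K | ¬ free m} := by
    rw [← card_image_of_injective _ (gnedinOlshanski_injective x)]
    congr 1
    ext m
    simp only [mem_image, mem_filter, mem_range, free, ne_eq, not_forall, not_not]
    constructor
    · rintro ⟨j, ⟨hj, hK⟩, rfl⟩
      exact ⟨hK, j, hj, rfl⟩
    · rintro ⟨hK, j, hj, rfl⟩
      exact ⟨j, ⟨hj, hK⟩, rfl⟩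
  have hcount : Nat.count free K = K - #{i ∈ range k | gnedinOlshanski x i < K} := by
    have hsplit : #{m ∈ range K | free m} + #{m ∈ range K | ¬ free m} = K := by
      rw [card_filter_add_card_filter_not, card_range]
    rw [hused, Nat.count_eq_card_filter_range]
    omega
  rw [gnedinOlshanski_eq_nth, ← hcount,
    Nat.lt_nth_iff_count_lt (setOf_gnedinOlshanski_ne_infinite x k)]

lemma card_filter_gnedinOlshanski_lt (x : ℕ → ℕ) (K L : ℕ) :
    #{i ∈ range L | gnedinOlshanski x i < K} = height x K L := by
  induction L with
  | zero => rfl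
  | succ L ih =>
    rw [range_add_one, filter_insert, height, ← ih]
    by_cases h : gnedinOlshanski x L < K
    · rw [if_pos h, if_pos ((gnedinOlshanski_lt_iff x K L).mp h),
        card_insert_of_notMem (by simp)]
    · rw [if_neg h, if_neg (mt (gnedinOlshanski_lt_iff x K L).mpr h), add_zero]

section HeightProb

variable {q : ℝ}

lemma mallowsHeightProb_nonneg (hq0 : 0 ≤ q) (hq1 : q ≤ 1) (K L s : ℕ) :
    0 ≤ mallowsHeightProb q K L s := by
  have h : ∀ n : ℕ, 0 ≤ 1 - q ^ n := fun n => sub_nonneg.mpr (pow_le_one₀ hq0 hq1)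
  unfold mallowsHeightProb
  have := prod_nonneg fun i (_ : i ∈ range s) => h (i + 1)
  have := prod_nonneg fun i (_ : i ∈ range s) => mul_nonneg (h (K - i)) (h (L - i))
  positivity

lemma mallowsHeightProb_eq_zero_of_lt_left {K L s : ℕ} (h : K < s) :
    mallowsHeightProb q K L s = 0 := by
  rw [mallowsHeightProb, prod_eq_zero (mem_range.mpr h) (by simp), mul_zero, zero_div]

lemma mallowsHeightProb_eq_zero_of_lt_right {K L s : ℕ} (h : L < s) :
    mallowsHeightProb q K L s = 0 := by
  rw [mallowsHeightProb, prod_eq_zero (mem_range.mpr h) (by simp), mul_zero, zero_div]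

lemma mallowsHeightProb_zero (K L : ℕ) : mallowsHeightProb q K L 0 = q ^ (K * L) := by
  simp [mallowsHeightProb]

lemma mallowsHeightProb_succ_succ (hq0 : 0 ≤ q) (hq1 : q < 1) (K m s : ℕ) :
    mallowsHeightProb q K (m + 1) (s + 1)
      = mallowsHeightProb q K m (s + 1) * q ^ (K - (s + 1))
        + mallowsHeightProb q K m s * (1 - q ^ (K - s)) := by
  rcases le_or_gt K s with hK | hK
  · rw [mallowsHeightProb_eq_zero_of_lt_left (by omega),
      mallowsHeightProb_eq_zero_of_lt_left (by omega), Nat.sub_eq_zero_of_le hK]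
    ring
  rcases lt_or_ge m s with hm | hm
  · rw [mallowsHeightProb_eq_zero_of_lt_right (by omega),
      mallowsHeightProb_eq_zero_of_lt_right (by omega),
      mallowsHeightProb_eq_zero_of_lt_right hm]
    ring
  have hD : 1 - q ^ (s + 1) ≠ 0 := (sub_pos.mpr (pow_lt_one₀ hq0 hq1 s.succ_ne_zero)).ne'
  obtain ⟨a, rfl⟩ := Nat.exists_eq_add_of_lt hK
  obtain ⟨b, rfl⟩ := Nat.exists_eq_add_of_le hm
  have hshift : ∏ i ∈ range (s + 1), (1 - q ^ (s + b + 1 - i))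
      = (1 - q ^ (s + b + 1)) * ∏ i ∈ range s, (1 - q ^ (s + b - i)) := by
    rw [prod_range_succ', mul_comm]
    simp
  simp only [mallowsHeightProb, prod_mul_distrib, hshift]
  simp only [prod_range_succ _ s]
  rw [show s + a + 1 - s = a + 1 by omega, show s + a + 1 - (s + 1) = a by omega,
    show s + b + 1 - (s + 1) = b by omega, show s + b - (s + 1) = b - 1 by omega,
    show s + b - s = b by omega]
  -- with `m = s + b`, the common factor cancels down to
  -- `1 - q^(m+1) = (1 - q^b) + q^b (1 - q^(s+1))`
  rcases b with _ | b
  · field_simp [hD]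
    simp only [pow_zero, sub_self, mul_zero, zero_mul, zero_add]
    ring
  · rw [Nat.add_sub_cancel]
    field_simp [hD]
    ring

end HeightProb

lemma exists_setOf_eq_preimage_of_dependsOn {Ω ι β : Type*} {ξ : ι → Ω → β}
    {P : (ι → β) → Prop} {S : Finset ι} (hP : DependsOn P S) :
    ∃ A : Set (S → β), {ω | P (ξ · ω)} = (fun ω (i : S) => ξ i ω) ⁻¹' A := by
  obtain ⟨g, rfl⟩ := dependsOn_iff_exists_comp.mp hP
  exact ⟨{v | g v}, rfl⟩

section Independence

variable {Ω ι β : Type*} [MeasurableSpace Ω] {μ : Measure Ω}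
  [MeasurableSpace β] [DiscreteMeasurableSpace β] [Countable β] {ξ : ι → Ω → β}

lemma measurableSet_setOf_of_dependsOn (hmeas : ∀ i, Measurable (ξ i))
    {P : (ι → β) → Prop} {S : Finset ι} (hP : DependsOn P S) :
    MeasurableSet {ω | P (ξ · ω)} := by
  obtain ⟨A, hA⟩ := exists_setOf_eq_preimage_of_dependsOn (ξ := ξ) hP
  rw [hA]
  exact measurable_pi_lambda (fun ω (i : S) => ξ i ω) (fun i => hmeas i) .of_discrete

lemma measure_setOf_and_eq_mul_of_dependsOn (hmeas : ∀ i, Measurable (ξ i))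
    (hindep : iIndepFun ξ μ) {P Q : (ι → β) → Prop} {S T : Finset ι} (hST : Disjoint S T)
    (hP : DependsOn P S) (hQ : DependsOn Q T) :
    μ {ω | P (ξ · ω) ∧ Q (ξ · ω)} = μ {ω | P (ξ · ω)} * μ {ω | Q (ξ · ω)} := by
  obtain ⟨A, hA⟩ := exists_setOf_eq_preimage_of_dependsOn (ξ := ξ) hP
  obtain ⟨B, hB⟩ := exists_setOf_eq_preimage_of_dependsOn (ξ := ξ) hQ
  rw [Set.ofPred_and, hA, hB]
  exact (hindep.indepFun_finset S T hST hmeas).measure_inter_preimage_eq_mul A B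
    .of_discrete .of_discrete

end Independence

section Geometric

variable {Ω : Type*} [MeasurableSpace Ω] {μ : Measure Ω} {q : ℝ} {X : Ω → ℕ}

lemma measure_lt_of_geometric (hq0 : 0 ≤ q) (hq1 : q ≤ 1) (hX : Measurable X)
    (hgeom : ∀ n, μ {ω | X ω = n} = ENNReal.ofReal (q ^ n * (1 - q))) (t : ℕ) :
    μ {ω | X ω < t} = ENNReal.ofReal (1 - q ^ t) := by
  have hunion : {ω | X ω < t} = X ⁻¹' ↑(range t) := by
    ext ω
    simp
  rw [hunion, ← sum_measure_preimage_singleton _ fun n _ => hX (measurableSet_singleton n)]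
  change ∑ n ∈ range t, μ {ω | X ω = n} = _
  simp_rw [hgeom]
  rw [← ENNReal.ofReal_sum_of_nonneg
      fun n _ => mul_nonneg (pow_nonneg hq0 n) (sub_nonneg.mpr hq1),
    ← sum_mul, geom_sum_mul_neg]

lemma measure_le_of_geometric [IsProbabilityMeasure μ] (hq0 : 0 ≤ q) (hq1 : q ≤ 1)
    (hX : Measurable X) (hgeom : ∀ n, μ {ω | X ω = n} = ENNReal.ofReal (q ^ n * (1 - q)))
    (t : ℕ) :
    μ {ω | t ≤ X ω} = ENNReal.ofReal (q ^ t) := by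
  have hcompl : {ω | t ≤ X ω} = {ω | X ω < t}ᶜ := by
    ext ω
    simp
  have hmeas : MeasurableSet {ω | X ω < t} := hX measurableSet_Iio
  rw [hcompl, prob_compl_eq_one_sub hmeas, measure_lt_of_geometric hq0 hq1 hX hgeom,
    ← ENNReal.ofReal_one, ← ENNReal.ofReal_sub _ (sub_nonneg.mpr (pow_le_one₀ hq0 hq1)),
    sub_sub_cancel]

end Geometric

section Chain

variable {Ω : Type*} [MeasurableSpace Ω] {μ : Measure Ω} [IsProbabilityMeasure μ] {q : ℝ}
  {ξ : ℕ → Ω → ℕ}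

lemma measure_height_eq (hq0 : 0 ≤ q) (hq1 : q < 1) (hmeas : ∀ i, Measurable (ξ i))
    (hindep : iIndepFun ξ μ)
    (hgeom : ∀ i n, μ {ω | ξ i ω = n} = ENNReal.ofReal (q ^ n * (1 - q))) (K m s : ℕ) :
    μ {ω | height (ξ · ω) K m = s} = ENNReal.ofReal (mallowsHeightProb q K m s) := by
  induction m generalizing s with
  | zero =>
    cases s with
    | zero => simp [height, mallowsHeightProb_zero]
    | succ s => simp [height, mallowsHeightProb_eq_zero_of_lt_right]
  | succ m ih =>
    have hsplit : ∀ (c : ℕ) (p : ℕ → Prop),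
        μ {ω | height (ξ · ω) K m = c ∧ p (ξ m ω)}
          = μ {ω | height (ξ · ω) K m = c} * μ {ω | p (ξ m ω)} :=
      fun c p => measure_setOf_and_eq_mul_of_dependsOn (P := fun x => height x K m = c)
        (Q := fun x => p (x m)) (S := range m) (T := {m}) hmeas hindep
        (disjoint_singleton_right.mpr (by simp))
        (dependsOn_height_eq K m c) (fun x y h => congrArg p (h m (by simp)))
    have hle := measure_le_of_geometric (μ := μ) hq0 hq1.le (hmeas m) (hgeom m)
    have hlt := measure_lt_of_geometric (μ := μ) hq0 hq1.le (hmeas m) (hgeom m)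
    have hM := mallowsHeightProb_nonneg hq0 hq1.le
    cases s with
    | zero =>
      calc μ {ω | height (ξ · ω) K (m + 1) = 0}
          = μ {ω | height (ξ · ω) K m = 0 ∧ K ≤ ξ m ω} := by
            simp_rw [height_succ_eq_zero_iff]
        _ = μ {ω | height (ξ · ω) K m = 0} * μ {ω | K ≤ ξ m ω} := hsplit 0 (K ≤ ·)
        _ = ENNReal.ofReal (mallowsHeightProb q K (m + 1) 0) := by
            rw [ih, hle, ← ENNReal.ofReal_mul (hM _ _ _), mallowsHeightProb_zero,
              mallowsHeightProb_zero, Nat.mul_succ, pow_add]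
    | succ s =>
      have hdisj : Disjoint {ω | height (ξ · ω) K m = s + 1 ∧ K - (s + 1) ≤ ξ m ω}
          {ω | height (ξ · ω) K m = s ∧ ξ m ω < K - s} :=
        Set.disjoint_left.mpr fun ω h h' => by simp_all
      have hmeas' : MeasurableSet {ω | height (ξ · ω) K m = s ∧ ξ m ω < K - s} :=
        (measurableSet_setOf_of_dependsOn hmeas (dependsOn_height_eq K m s)).inter
          (hmeas m measurableSet_Iio)
      calc μ {ω | height (ξ · ω) K (m + 1) = s + 1}
          = μ ({ω | height (ξ · ω) K m = s + 1 ∧ K - (s + 1) ≤ ξ m ω}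
              ∪ {ω | height (ξ · ω) K m = s ∧ ξ m ω < K - s}) := by
            simp_rw [height_succ_eq_succ_iff, Set.ofPred_or]
        _ = μ {ω | height (ξ · ω) K m = s + 1} * μ {ω | K - (s + 1) ≤ ξ m ω}
              + μ {ω | height (ξ · ω) K m = s} * μ {ω | ξ m ω < K - s} := by
            rw [measure_union hdisj hmeas', hsplit (s + 1) (K - (s + 1) ≤ ·),
              hsplit s (· < K - s)]
        _ = ENNReal.ofReal (mallowsHeightProb q K (m + 1) (s + 1)) := by
            rw [ih, ih, hle, hlt, ← ENNReal.ofReal_mul (hM _ _ _),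
              ← ENNReal.ofReal_mul (hM _ _ _),
              ← ENNReal.ofReal_add (mul_nonneg (hM _ _ _) (pow_nonneg hq0 _))
                (mul_nonneg (hM _ _ _) (sub_nonneg.mpr (pow_le_one₀ hq0 hq1.le))),
              mallowsHeightProb_succ_succ hq0 hq1]

lemma measure_forall_height_eq (hq0 : 0 ≤ q) (hq1 : q < 1) (hmeas : ∀ i, Measurable (ξ i))
    (hindep : iIndepFun ξ μ)
    (hgeom : ∀ i n, μ {ω | ξ i ω = n} = ENNReal.ofReal (q ^ n * (1 - q)))
    (K : ℕ) (L s : ℕ → ℕ) (r : ℕ) (hL : MonotoneOn L (Set.Iio r)) :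
    μ {ω | ∀ j < r, height (ξ · ω) K (L j) = ∑ i ∈ range (j + 1), s i}
      = ENNReal.ofReal (∏ j ∈ range r,
          mallowsHeightProb q (K - ∑ i ∈ range j, s i)
            (L j - (if j = 0 then 0 else L (j - 1))) (s j)) := by
  induction r with
  | zero => simp
  | succ r ih =>
    set b := if r = 0 then 0 else L (r - 1)
    have hLb : ∀ j < r, L j ≤ b := fun j hj => by
      simp only [b, if_neg (by omega : r ≠ 0)]
      exact hL (Set.mem_Iio.mpr (by omega)) (Set.mem_Iio.mpr (by omega)) (by omega)
    have hbL : b ≤ L r := by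
      rcases Nat.eq_zero_or_pos r with rfl | hr
      · exact Nat.zero_le _
      · simp only [b, if_neg hr.ne']
        exact hL (Set.mem_Iio.mpr (by omega)) (Set.mem_Iio.mpr (by omega)) (by omega)
    have hevent : ∀ x : ℕ → ℕ,
        (∀ j < r + 1, height x K (L j) = ∑ i ∈ range (j + 1), s i) ↔
          (∀ j < r, height x K (L j) = ∑ i ∈ range (j + 1), s i) ∧
            height (fun t => x (b + t)) (K - ∑ i ∈ range r, s i) (L r - b) = s r := fun x => by
      rw [Nat.forall_lt_succ_right, sum_range_succ]
      refine and_congr_right fun hprev => height_eq_add_iff hbL ?_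
      rcases r with _ | r
      · rfl
      · exact hprev r (lt_add_one r)
    have hsplit := measure_setOf_and_eq_mul_of_dependsOn hmeas hindep
      (hP := dependsOn_forall_height_eq (K := K) (c := fun j => ∑ i ∈ range (j + 1), s i) hLb)
      (hQ := dependsOn_height_shift_eq b (K - ∑ i ∈ range r, s i) (L r - b) (s r))
      (by rw [range_eq_Ico]; exact Ico_disjoint_Ico_consecutive 0 b _)
    beta_reduce at hsplit
    simp_rw [hevent]
    rw [hsplit, ih (hL.mono (Set.Iio_subset_Iio (Nat.le_succ r))),
      measure_height_eq hq0 hq1 (fun t => hmeas (b + t)) (hindep.precomp (add_right_injective b))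
        (fun t => hgeom (b + t)),
      ← ENNReal.ofReal_mul (prod_nonneg fun j _ => mallowsHeightProb_nonneg hq0 hq1.le _ _ _),
      prod_range_succ]

end Chain

end Mallows

theorem mallows_multi_point_height_general
    {Ω : Type*} [MeasurableSpace Ω] (μ : Measure Ω) [IsProbabilityMeasure μ]
    (q : ℝ) (hq0 : 0 ≤ q) (hq1 : q < 1)
    (ξ : ℕ → Ω → ℕ) (hmeas : ∀ i, Measurable (ξ i))
    (hindep : ProbabilityTheory.iIndepFun ξ μ)
    (hgeom : ∀ i n, μ {ω | ξ i ω = n} = ENNReal.ofReal (q ^ n * (1 - q)))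
    (K r : ℕ) (L s : ℕ → ℕ)
    (hmono : ∀ j, j + 1 < r → L j ≤ L (j + 1)) :
    μ {ω | ∀ j < r,
        ((Finset.range (L j)).filter
          (fun i => gnedinOlshanski (fun k => ξ k ω) i < K)).card
          = ∑ i ∈ Finset.range (j + 1), s i}
      = ENNReal.ofReal (∏ j ∈ Finset.range r,
          mallowsHeightProb q (K - ∑ i ∈ Finset.range j, s i)
            (L j - (if j = 0 then 0 else L (j - 1))) (s j)) := by
  have hL : MonotoneOn L (Set.Iio r) := monotoneOn_of_le_succ Set.ordConnected_Iio
    fun j _ _ hj => by simpa using hmono j (by simpa using hj)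
  simp_rw [Mallows.card_filter_gnedinOlshanski_lt]
  exact Mallows.measure_forall_height_eq hq0 hq1 hmeas hindep hgeom K L s r hL

/-- Multi-point factorization of the Mallows height function: for a Mallows-random
permutation of `ℕ` (constructed from iid geometric variables `ξ` with
`P(ξ = i) = q^i(1-q)`), levels `0 ≤ L 0 ≤ L 1 ≤ … ≤ L (r-1)` and increments
`s 0, …, s (r-1)` with `∑ s j ≤ K`, the probability that for every `j < r` exactly
`∑_{i ≤ j} s i` of the positions `0,…,L j - 1` receive values `< K` equals
`∏_{j<r} P(f_{ℕ, K - ∑_{i<j} s i, L j - L (j-1)} = s j)` (with `L (-1) := 0`). -/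
theorem mallows_multi_point_height
    {Ω : Type*} [MeasurableSpace Ω] (μ : Measure Ω) [IsProbabilityMeasure μ]
    (q : ℝ) (hq0 : 0 ≤ q) (hq1 : q < 1)
    (ξ : ℕ → Ω → ℕ) (hmeas : ∀ i, Measurable (ξ i))
    (hindep : ProbabilityTheory.iIndepFun ξ μ)
    (hgeom : ∀ i n, μ {ω | ξ i ω = n} = ENNReal.ofReal (q ^ n * (1 - q)))
    (K r : ℕ) (L s : ℕ → ℕ)
    (hmono : ∀ j, j + 1 < r → L j ≤ L (j + 1))
    (hsum : ∑ i ∈ Finset.range r, s i ≤ K) :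
    μ {ω | ∀ j < r,
        ((Finset.range (L j)).filter
          (fun i => gnedinOlshanski (fun k => ξ k ω) i < K)).card
          = ∑ i ∈ Finset.range (j + 1), s i}
      = ENNReal.ofReal (∏ j ∈ Finset.range r,
          mallowsHeightProb q (K - ∑ i ∈ Finset.range j, s i)
            (L j - (if j = 0 then 0 else L (j - 1))) (s j)) :=
  mallows_multi_point_height_general μ q hq0 hq1 ξ hmeas hindep hgeom K r L s hmono
end
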